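/- arXiv:1101.0017 — 6 statements merged into one kernel-verified Lean document; each statement's English description precedes it below -/
import Mathlib

section
/- Let H be a Hilbert space, H^{-1} a normed space, and ι : H → H^{-1} a compact linear embedding. Let T, S be closed densely defined operators on H and let 𝓗 = ker T ∩ ker S on dom T ∩ dom S. Suppose that for every ε > 0 there is C_ε > 0 such that ‖u‖² ≤ ε(‖Tu‖² + ‖Su‖²) + C_ε‖ι u‖²_{-1} for all u ∈ dom T ∩ dom S. Then 𝓗 is finite-dimensional. -/
/-!
On `𝓗` the estimate with `ε = 1` reads `‖u‖ ≤ √C ‖ι u‖`, so the restriction of `ι` to `𝓗` is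
antilipschitz. A compact operator maps the unit ball of `𝓗` to a totally bounded set, and an
antilipschitz map pulls total boundedness back; hence the unit ball of `𝓗` is totally bounded and
`𝓗` is finite-dimensional by Riesz's theorem.
-/

theorem IsCompactOperator.finiteDimensional_of_antilipschitz {𝕜 E F : Type*}
    [NontriviallyNormedField 𝕜] [CompleteSpace 𝕜]
    [NormedAddCommGroup E] [NormedSpace 𝕜 E] [NormedAddCommGroup F] [NormedSpace 𝕜 F]
    {f : E →L[𝕜] F} (hf : IsCompactOperator f) {K : NNReal} (hK : AntilipschitzWith K f) :
    FiniteDimensional 𝕜 E := by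
  have hball : TotallyBounded (f '' Metric.closedBall 0 1) :=
    (hf.isCompact_closure_image_of_bounded Metric.isBounded_closedBall).totallyBounded.subset
      subset_closure
  exact .of_totallyBounded_nhds_zero 𝕜 (Metric.closedBall_mem_nhds 0 one_pos)
    ((totallyBounded_image_iff (hK.isUniformInducing f.uniformContinuous)).1 hball)

namespace LinearPMap

variable {R E F : Type*} [Ring R] [AddCommGroup E] [Module R E] [AddCommGroup F] [Module R F]

def ker (T : E →ₗ.[R] F) : Submodule R E :=
  (LinearMap.ker T.toFun).map T.domain.subtype

theorem mem_ker {T : E →ₗ.[R] F} {u : E} : u ∈ T.ker ↔ ∃ h : u ∈ T.domain, T ⟨u, h⟩ = 0 := by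
  simp [ker, LinearMap.mem_ker]

end LinearPMap

theorem compactness_estimate_harmonic_finiteDimensional_general
    {H H' H'' Hm : Type*}
    [NormedAddCommGroup H] [InnerProductSpace ℂ H]
    [NormedAddCommGroup H'] [InnerProductSpace ℂ H']
    [NormedAddCommGroup H''] [InnerProductSpace ℂ H'']
    [NormedAddCommGroup Hm] [NormedSpace ℂ Hm]
    (ι : H →L[ℂ] Hm) (hι_compact : IsCompactOperator ι)
    (T : H →ₗ.[ℂ] H') (S : H →ₗ.[ℂ] H'')
    (est : ∀ ε > (0 : ℝ), ∃ C > (0 : ℝ),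
      ∀ (u : H) (huT : u ∈ T.domain) (huS : u ∈ S.domain),
        ‖u‖ ^ 2 ≤ ε * (‖T ⟨u, huT⟩‖ ^ 2 + ‖S ⟨u, huS⟩‖ ^ 2) + C * ‖ι u‖ ^ 2) :
    ∃ (n : ℕ) (b : Fin n → H),
      ∀ (u : H) (huT : u ∈ T.domain) (huS : u ∈ S.domain),
        T ⟨u, huT⟩ = 0 → S ⟨u, huS⟩ = 0 →
          u ∈ Submodule.span ℂ (Set.range b) := by
  obtain ⟨C, -, hC⟩ := est 1 one_pos
  set 𝓗 := T.ker ⊓ S.ker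
  have bound : ∀ u : 𝓗, ‖u‖ ≤ √C * ‖(ι ∘L 𝓗.subtypeL) u‖ := by
    rintro ⟨u, hu_kerT, hu_kerS⟩
    obtain ⟨huT, hTu⟩ := LinearPMap.mem_ker.1 hu_kerT
    obtain ⟨huS, hSu⟩ := LinearPMap.mem_ker.1 hu_kerS
    have hsq : ‖u‖ ^ 2 ≤ C * ‖ι u‖ ^ 2 := by simpa [hTu, hSu] using hC u huT huS
    calc ‖u‖ ≤ √(C * ‖ι u‖ ^ 2) := Real.le_sqrt_of_sq_le hsq
      _ = √C * ‖ι u‖ := by rw [Real.sqrt_mul' C (sq_nonneg _), Real.sqrt_sq (norm_nonneg _)]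
  have : FiniteDimensional ℂ 𝓗 :=
    (hι_compact.comp_clm 𝓗.subtypeL).finiteDimensional_of_antilipschitz
      ((ι ∘L 𝓗.subtypeL).antilipschitz_of_bound (K := ⟨√C, Real.sqrt_nonneg C⟩) bound)
  obtain ⟨n, b, hb⟩ :=
    Submodule.fg_iff_exists_fin_generating_family.1 (Module.Finite.iff_fg.1 this)
  exact ⟨n, b, fun u huT huS hTu hSu =>
    hb ▸ ⟨LinearPMap.mem_ker.2 ⟨huT, hTu⟩, LinearPMap.mem_ker.2 ⟨huS, hSu⟩⟩⟩

/-- A compactness estimate for a pair of closed densely defined operators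
implies that the space of "harmonic" elements `𝓗 = ker T ∩ ker S` is finite-dimensional
(here expressed as: `𝓗` is contained in the span of finitely many vectors). -/
theorem compactness_estimate_harmonic_finiteDimensional
    {H H' H'' Hm : Type*}
    [NormedAddCommGroup H] [InnerProductSpace ℂ H] [CompleteSpace H]
    [NormedAddCommGroup H'] [InnerProductSpace ℂ H'] [CompleteSpace H']
    [NormedAddCommGroup H''] [InnerProductSpace ℂ H''] [CompleteSpace H'']
    [NormedAddCommGroup Hm] [NormedSpace ℂ Hm]
    (ι : H →L[ℂ] Hm) (hι_compact : IsCompactOperator ι)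
    (hι_inj : Function.Injective ι)
    (T : H →ₗ.[ℂ] H') (S : H →ₗ.[ℂ] H'')
    (hT_closed : T.IsClosed) (hT_dense : Dense (T.domain : Set H))
    (hS_closed : S.IsClosed) (hS_dense : Dense (S.domain : Set H))
    (est : ∀ ε > (0 : ℝ), ∃ C > (0 : ℝ),
      ∀ (u : H) (huT : u ∈ T.domain) (huS : u ∈ S.domain),
        ‖u‖ ^ 2 ≤ ε * (‖T ⟨u, huT⟩‖ ^ 2 + ‖S ⟨u, huS⟩‖ ^ 2) + C * ‖ι u‖ ^ 2) :
    ∃ (n : ℕ) (b : Fin n → H),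
      ∀ (u : H) (huT : u ∈ T.domain) (huS : u ∈ S.domain),
        T ⟨u, huT⟩ = 0 → S ⟨u, huS⟩ = 0 →
          u ∈ Submodule.span ℂ (Set.range b) :=
  compactness_estimate_harmonic_finiteDimensional_general ι hι_compact T S est
end

section
/- Under the same hypotheses (compact embedding ι : H → H^{-1} and compactness estimate ‖u‖² ≤ ε(‖Tu‖² + ‖Su‖²) + C_ε‖ι u‖²_{-1}), there is a constant C > 0 such that ‖u‖² ≤ C(‖Tu‖² + ‖Su‖²) for all u ∈ dom T ∩ dom S orthogonal to 𝓗 = ker T ∩ ker S. -/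
/-!
If the basic estimate failed, there would be unit vectors `vₙ ⊥ 𝓗` with
`‖T vₙ‖² + ‖S vₙ‖² → 0`. Compactness of `ι` makes `ι vₙ` converge along a subsequence, and the
compactness estimate with `ε = 1` then makes that subsequence Cauchy. Closedness of `T` and `S`
puts its limit `w` in `𝓗`; but `w` is also a limit of vectors orthogonal to `𝓗`, so `w = 0`,
contradicting `‖w‖ = 1`.
-/

open Filter Topology

theorem LinearPMap.IsClosed.exists_apply_eq_of_tendsto {R E F α : Type*} [CommRing R]
    [AddCommGroup E] [Module R E] [TopologicalSpace E]
    [AddCommGroup F] [Module R F] [TopologicalSpace F]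
    {T : E →ₗ.[R] F} (hT : T.IsClosed) {l : Filter α} [l.NeBot] {x : α → E}
    (hxT : ∀ a, x a ∈ T.domain) {w : E} {y : F} (hx : Tendsto x l (𝓝 w))
    (hTx : Tendsto (fun a => T ⟨x a, hxT a⟩) l (𝓝 y)) :
    ∃ hw : w ∈ T.domain, T ⟨w, hw⟩ = y := by
  have hwy : (w, y) ∈ T.graph :=
    hT.mem_of_tendsto (hx.prodMk_nhds hTx) (.of_forall fun a => T.mem_graph ⟨x a, hxT a⟩)
  exact ⟨mem_domain_of_mem_graph hwy, ((image_iff _).2 hwy).symm⟩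

theorem cauchySeq_of_sq_dist_le {β X Y : Type*} [Nonempty β] [SemilatticeSup β]
    [PseudoMetricSpace X] [PseudoMetricSpace Y] {x : β → X} {y : β → Y} {e : β → ℝ}
    (he : Tendsto e atTop (𝓝 0)) (hy : CauchySeq y) (C : ℝ)
    (h : ∀ m n, dist (x m) (x n) ^ 2 ≤ e m + e n + C * dist (y m) (y n) ^ 2) :
    CauchySeq x := by
  rw [cauchySeq_iff_tendsto_dist_atTop_0] at hy ⊢
  have hsq : Tendsto (fun p : β × β => dist (x p.1) (x p.2) ^ 2) atTop (𝓝 0) := by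
    refine squeeze_zero (fun _ => sq_nonneg _) (fun p => h p.1 p.2) ?_
    rw [← prod_atTop_atTop_eq] at hy ⊢
    simpa using ((he.comp tendsto_fst).add (he.comp tendsto_snd)).add ((hy.pow 2).const_mul C)
  simpa only [Real.sqrt_sq dist_nonneg, Real.sqrt_zero] using hsq.sqrt

theorem IsCompactOperator.exists_tendsto_comp_subseq {𝕜 E X : Type*} [NontriviallyNormedField 𝕜]
    [SeminormedAddCommGroup E] [NormedSpace 𝕜 E] [SeminormedAddCommGroup X] [NormedSpace 𝕜 X]
    {f : E →ₗ[𝕜] X} (hf : IsCompactOperator f) {v : ℕ → E} {r : ℝ} (hv : ∀ n, ‖v n‖ ≤ r) :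
    ∃ z, ∃ φ : ℕ → ℕ, StrictMono φ ∧ Tendsto (fun k => f (v (φ k))) atTop (𝓝 z) := by
  obtain ⟨K, hK, hfK⟩ := hf.image_closedBall_subset_compact r
  obtain ⟨z, -, φ, hφ, hz⟩ :=
    hK.tendsto_subseq fun n => hfK ⟨v n, mem_closedBall_zero_iff.2 (hv n), rfl⟩
  exact ⟨z, φ, hφ, hz⟩

theorem tendsto_zero_of_tendsto_sq_norm_add_sq_norm {α F G : Type*} [SeminormedAddGroup F]
    [SeminormedAddGroup G] {f : α → F} {g : α → G} {l : Filter α}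
    (h : Tendsto (fun a => ‖f a‖ ^ 2 + ‖g a‖ ^ 2) l (𝓝 0)) : Tendsto f l (𝓝 0) := by
  have hsq : Tendsto (fun a => ‖f a‖ ^ 2) l (𝓝 0) :=
    squeeze_zero (fun _ => sq_nonneg _) (fun a => le_add_of_nonneg_right (sq_nonneg _)) h
  rw [tendsto_zero_iff_norm_tendsto_zero]
  simpa only [Real.sqrt_sq (norm_nonneg _), Real.sqrt_zero] using hsq.sqrt

theorem norm_sub_sq_le {E : Type*} [SeminormedAddGroup E] (a b : E) :
    ‖a - b‖ ^ 2 ≤ 2 * ‖a‖ ^ 2 + 2 * ‖b‖ ^ 2 := by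
  nlinarith [norm_sub_le a b, norm_nonneg (a - b), sq_nonneg (‖a‖ - ‖b‖)]

section Estimates

variable {𝕜 E F G X : Type*} [RCLike 𝕜] [NormedAddCommGroup E] [InnerProductSpace 𝕜 E]
  [NormedAddCommGroup F] [NormedSpace 𝕜 F] [NormedAddCommGroup G] [NormedSpace 𝕜 G]
  {T : E →ₗ.[𝕜] F} {S : E →ₗ.[𝕜] G}

variable (T S) in
def energy (u : E) (huT : u ∈ T.domain) (huS : u ∈ S.domain) : ℝ :=
  ‖T ⟨u, huT⟩‖ ^ 2 + ‖S ⟨u, huS⟩‖ ^ 2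

theorem energy_nonneg (u : E) (huT : u ∈ T.domain) (huS : u ∈ S.domain) :
    0 ≤ energy T S u huT huS := by
  unfold energy; positivity

theorem energy_sub_le {a b : E} (haT : a ∈ T.domain) (haS : a ∈ S.domain)
    (hbT : b ∈ T.domain) (hbS : b ∈ S.domain) :
    energy T S (a - b) (T.domain.sub_mem haT hbT) (S.domain.sub_mem haS hbS) ≤
      2 * energy T S a haT haS + 2 * energy T S b hbT hbS := by
  have hT : T ⟨a - b, T.domain.sub_mem haT hbT⟩ = T ⟨a, haT⟩ - T ⟨b, hbT⟩ :=
    T.map_sub ⟨a, haT⟩ ⟨b, hbT⟩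
  have hS : S ⟨a - b, S.domain.sub_mem haS hbS⟩ = S ⟨a, haS⟩ - S ⟨b, hbS⟩ :=
    S.map_sub ⟨a, haS⟩ ⟨b, hbS⟩
  simp only [energy, hT, hS]
  linarith [norm_sub_sq_le (T ⟨a, haT⟩) (T ⟨b, hbT⟩), norm_sub_sq_le (S ⟨a, haS⟩) (S ⟨b, hbS⟩)]

theorem energy_smul (c : 𝕜) {u : E} (huT : u ∈ T.domain) (huS : u ∈ S.domain) :
    energy T S (c • u) (T.domain.smul_mem c huT) (S.domain.smul_mem c huS) =
      ‖c‖ ^ 2 * energy T S u huT huS := by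
  have hT : T ⟨c • u, T.domain.smul_mem c huT⟩ = c • T ⟨u, huT⟩ := T.map_smul c ⟨u, huT⟩
  have hS : S ⟨c • u, S.domain.smul_mem c huS⟩ = c • S ⟨u, huS⟩ := S.map_smul c ⟨u, huS⟩
  simp only [energy, hT, hS, norm_smul, mul_pow, mul_add]

theorem ne_zero_of_mul_energy_lt {c : ℝ} (hc : 0 ≤ c) {u : E} {huT : u ∈ T.domain}
    {huS : u ∈ S.domain} (h : c * energy T S u huT huS < ‖u‖ ^ 2) : u ≠ 0 := by
  have := mul_nonneg hc (energy_nonneg u huT huS)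
  exact norm_pos_iff.1 <|
    lt_of_pow_lt_pow_left₀ 2 (norm_nonneg u) (by rw [zero_pow two_ne_zero]; linarith)

theorem energy_smul_inv_norm_lt {c : ℝ} (hc : 0 < c) {u : E} {huT : u ∈ T.domain}
    {huS : u ∈ S.domain} (h : c * energy T S u huT huS < ‖u‖ ^ 2) :
    energy T S ((‖u‖⁻¹ : 𝕜) • u) (T.domain.smul_mem _ huT) (S.domain.smul_mem _ huS) < c⁻¹ := by
  have hu := norm_pos_iff.2 (ne_zero_of_mul_energy_lt hc.le h)
  rw [energy_smul _ huT huS, norm_inv, RCLike.norm_ofReal, abs_norm, inv_pow,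
    inv_mul_lt_iff₀ (by positivity), lt_mul_inv_iff₀ hc]
  linarith

theorem not_tendsto_energy_zero_of_orthogonal [CompleteSpace E] [NormedAddCommGroup X]
    [NormedSpace 𝕜 X] {ι : E →ₗ[𝕜] X} (hι : IsCompactOperator ι) (hT : T.IsClosed)
    (hS : S.IsClosed) {C : ℝ}
    (hgarding : ∀ u huT huS, ‖u‖ ^ 2 ≤ energy T S u huT huS + C * ‖ι u‖ ^ 2)
    {v : ℕ → E} (hvT : ∀ n, v n ∈ T.domain) (hvS : ∀ n, v n ∈ S.domain) (hv : ∀ n, ‖v n‖ = 1)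
    (hv_orth : ∀ n w (hwT : w ∈ T.domain) (hwS : w ∈ S.domain),
      T ⟨w, hwT⟩ = 0 → S ⟨w, hwS⟩ = 0 → inner 𝕜 (v n) w = 0) :
    ¬Tendsto (fun n => energy T S (v n) (hvT n) (hvS n)) atTop (𝓝 0) := by
  intro hE
  obtain ⟨z, φ, hφ, hιz⟩ := hι.exists_tendsto_comp_subseq fun n => (hv n).le
  have hEφ : Tendsto (fun k => energy T S (v (φ k)) (hvT (φ k)) (hvS (φ k))) atTop (𝓝 0) :=
    hE.comp hφ.tendsto_atTop
  have hcauchy : CauchySeq fun k => v (φ k) := by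
    refine cauchySeq_of_sq_dist_le (by simpa only [mul_zero] using hEφ.const_mul 2)
      hιz.cauchySeq C fun m n => ?_
    have hsub := energy_sub_le (hvT (φ m)) (hvS (φ m)) (hvT (φ n)) (hvS (φ n))
    have := hgarding _ (T.domain.sub_mem (hvT (φ m)) (hvT (φ n)))
      (S.domain.sub_mem (hvS (φ m)) (hvS (φ n)))
    simp only [dist_eq_norm, ← map_sub]
    linarith
  obtain ⟨w, hw⟩ := cauchySeq_tendsto_of_complete hcauchy
  obtain ⟨hwT, hTw⟩ := hT.exists_apply_eq_of_tendsto _ hw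
    (tendsto_zero_of_tendsto_sq_norm_add_sq_norm hEφ)
  obtain ⟨hwS, hSw⟩ := hS.exists_apply_eq_of_tendsto _ hw
    (tendsto_zero_of_tendsto_sq_norm_add_sq_norm (by simpa only [energy, add_comm] using hEφ))
  have hww : inner 𝕜 w w = 0 :=
    (isClosed_eq (continuous_id.inner continuous_const) continuous_const).mem_of_tendsto hw
      (.of_forall fun k => hv_orth (φ k) w hwT hwS hTw hSw)
  have hw1 : ‖w‖ = 1 := tendsto_nhds_unique hw.norm (by simp only [hv, tendsto_const_nhds])
  rw [inner_self_eq_zero.1 hww, norm_zero] at hw1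
  exact zero_ne_one hw1

end Estimates

theorem compactness_estimate_basic_estimate_on_orthogonal_general
    {H H' H'' Hm : Type*}
    [NormedAddCommGroup H] [InnerProductSpace ℂ H] [CompleteSpace H]
    [NormedAddCommGroup H'] [InnerProductSpace ℂ H']
    [NormedAddCommGroup H''] [InnerProductSpace ℂ H'']
    [NormedAddCommGroup Hm] [NormedSpace ℂ Hm]
    (ι : H →L[ℂ] Hm) (hι_compact : IsCompactOperator ι)
    (T : H →ₗ.[ℂ] H') (S : H →ₗ.[ℂ] H'')
    (hT_closed : T.IsClosed)
    (hS_closed : S.IsClosed)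
    (est : ∀ ε > (0 : ℝ), ∃ C > (0 : ℝ),
      ∀ (u : H) (huT : u ∈ T.domain) (huS : u ∈ S.domain),
        ‖u‖ ^ 2 ≤ ε * (‖T ⟨u, huT⟩‖ ^ 2 + ‖S ⟨u, huS⟩‖ ^ 2) + C * ‖ι u‖ ^ 2) :
    ∃ C > (0 : ℝ),
      ∀ (u : H) (huT : u ∈ T.domain) (huS : u ∈ S.domain),
        (∀ (v : H) (hvT : v ∈ T.domain) (hvS : v ∈ S.domain),
            T ⟨v, hvT⟩ = 0 → S ⟨v, hvS⟩ = 0 → inner (𝕜 := ℂ) u v = 0) →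
        ‖u‖ ^ 2 ≤ C * (‖T ⟨u, huT⟩‖ ^ 2 + ‖S ⟨u, huS⟩‖ ^ 2) := by
  obtain ⟨C, -, hC⟩ := est 1 one_pos
  by_contra! hcon
  choose u huT huS hu_orth hu_lt using fun n : ℕ => hcon ((n : ℝ) + 1) n.cast_add_one_pos
  have hu_ne n : u n ≠ 0 := ne_zero_of_mul_energy_lt n.cast_add_one_pos.le (hu_lt n)
  have hgarding (u : H) huT huS : ‖u‖ ^ 2 ≤ energy T S u huT huS + C * ‖ι u‖ ^ 2 := by
    simpa only [energy, one_mul] using hC u huT huS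
  refine not_tendsto_energy_zero_of_orthogonal (ι := (ι : H →ₗ[ℂ] Hm)) hι_compact
    hT_closed hS_closed hgarding
    (fun n => T.domain.smul_mem _ (huT n)) (fun n => S.domain.smul_mem _ (huS n))
    (fun n => norm_smul_inv_norm (hu_ne n))
    (fun n w hwT hwS hTw hSw => by rw [inner_smul_left, hu_orth n w hwT hwS hTw hSw, mul_zero]) ?_
  refine squeeze_zero (fun n => energy_nonneg _ _ _)
    (fun n => (energy_smul_inv_norm_lt n.cast_add_one_pos (hu_lt n)).le) ?_
  exact tendsto_one_div_add_atTop_nhds_zero_nat.congr fun n => one_div _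

/-- A compactness estimate implies the basic estimate with a uniform constant
on the orthogonal complement of the harmonic space `𝓗 = ker T ∩ ker S`
(cf. Nicoara, Lemma 5.3). -/
theorem compactness_estimate_basic_estimate_on_orthogonal
    {H H' H'' Hm : Type*}
    [NormedAddCommGroup H] [InnerProductSpace ℂ H] [CompleteSpace H]
    [NormedAddCommGroup H'] [InnerProductSpace ℂ H'] [CompleteSpace H']
    [NormedAddCommGroup H''] [InnerProductSpace ℂ H''] [CompleteSpace H'']
    [NormedAddCommGroup Hm] [NormedSpace ℂ Hm]
    (ι : H →L[ℂ] Hm) (hι_compact : IsCompactOperator ι)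
    (hι_inj : Function.Injective ι)
    (T : H →ₗ.[ℂ] H') (S : H →ₗ.[ℂ] H'')
    (hT_closed : T.IsClosed) (hT_dense : Dense (T.domain : Set H))
    (hS_closed : S.IsClosed) (hS_dense : Dense (S.domain : Set H))
    (est : ∀ ε > (0 : ℝ), ∃ C > (0 : ℝ),
      ∀ (u : H) (huT : u ∈ T.domain) (huS : u ∈ S.domain),
        ‖u‖ ^ 2 ≤ ε * (‖T ⟨u, huT⟩‖ ^ 2 + ‖S ⟨u, huS⟩‖ ^ 2) + C * ‖ι u‖ ^ 2) :
    ∃ C > (0 : ℝ),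
      ∀ (u : H) (huT : u ∈ T.domain) (huS : u ∈ S.domain),
        (∀ (v : H) (hvT : v ∈ T.domain) (hvS : v ∈ S.domain),
            T ⟨v, hvT⟩ = 0 → S ⟨v, hvS⟩ = 0 → inner (𝕜 := ℂ) u v = 0) →
        ‖u‖ ^ 2 ≤ C * (‖T ⟨u, huT⟩‖ ^ 2 + ‖S ⟨u, huS⟩‖ ^ 2) :=
  compactness_estimate_basic_estimate_on_orthogonal_general ι hι_compact T S hT_closed hS_closed est
end

section
/- Let A be an (n-1)×(n-1) Hermitian matrix with eigenvalues λ₁ ≤ ... ≤ λ_{n-1} and suppose λ₁ + ... + λ_q ≥ ε^{-1}. Then for any integer k with k ≤ n-1-q and any antisymmetric coefficient family (u_J) of (0,k)-forms, one has (Tr A) Σ'_{|J|=k} |u_J|² − Σ'_{|K|=k-1} Σ_{i,j} A_{ij} u_{iK} \overline{u_{jK}} ≥ ε^{-1} Σ'_{|J|=k} |u_J|². -/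
/-!
Diagonalize `A = U diag(λ) Uᴴ`. Transforming the coefficients by `U ⊗ ⋯ ⊗ U` preserves
antisymmetry and the `ℓ²` norm, and turns `∑_K ∑_{i,j} A_{ij} u_{iK} conj (u_{jK})` into
`∑_J λ_{J₀} |v_J|²`. Summed over all tuples, symmetry gives
`(k + 1) ∑_J λ_{J₀} |v_J|² = ∑_J (∑_t λ_{J_t}) |v_J|²`, so the right-hand side becomes
`∑_J (∑_{a ∉ J} λ_a) |v_J|²`. For injective `J` the complement of `J` has at least `q` elements,
and since every `q` eigenvalues sum to at least `ε⁻¹ > 0`, so does every larger set of them.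
Finally, sums over all tuples are `(k + 1)!` resp. `k!` times the sums over increasing ones.
-/

open Finset Matrix

theorem sum_comm₄ {α β γ δ M : Type*} [Fintype α] [Fintype β] [Fintype γ] [Fintype δ]
    [AddCommMonoid M] (f : α → β → γ → δ → M) :
    ∑ a, ∑ b, ∑ c, ∑ d, f a b c d = ∑ c, ∑ d, ∑ a, ∑ b, f a b c d :=
  calc _ = ∑ a, ∑ c, ∑ b, ∑ d, f a b c d := sum_congr rfl fun _ _ => sum_comm
    _ = ∑ c, ∑ a, ∑ b, ∑ d, f a b c d := sum_comm
    _ = _ := sum_congr rfl fun _ _ => (sum_congr rfl fun _ _ => sum_comm).trans sum_comm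

theorem sum_pi_fin_succ {ι M : Type*} [Fintype ι] [AddCommMonoid M] {n : ℕ}
    (F : (Fin (n + 1) → ι) → M) :
    ∑ I, F I = ∑ i, ∑ K : Fin n → ι, F (Fin.cons i K) := by
  rw [← (Fin.consEquiv fun _ => ι).sum_comp, Fintype.sum_prod_type]
  rfl

theorem sum_comp_perm {α β M : Type*} [Fintype α] [DecidableEq α] [Fintype β] [AddCommMonoid M]
    (σ : Equiv.Perm α) (F : (α → β) → M) :
    ∑ I, F (I ∘ σ) = ∑ I, F I :=
  (σ.symm.arrowCongr (Equiv.refl β)).sum_comp F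

theorem mul_mul_apply_eq_sum_sum {ι R : Type*} [Fintype ι] [CommRing R] (A B C : Matrix ι ι R)
    (i j : ι) : (A * B * C) i j = ∑ a, ∑ b, A i a * B a b * C b j := by
  simp only [mul_apply, sum_mul]
  exact sum_comm

theorem vecMul_dotProduct_star_vecMul {R m n : Type*} [CommRing R] [StarRing R] [Fintype m]
    [Fintype n] [DecidableEq m] {M : Matrix m n R} (hM : M * Mᴴ = 1) (x y : m → R) :
    (x ᵥ* M) ⬝ᵥ star (y ᵥ* M) = x ⬝ᵥ star y := by
  rw [star_vecMul, ← dotProduct_mulVec, mulVec_mulVec, hM, one_mulVec]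

section TensorPow

variable {R ι : Type*} [CommRing R] [Fintype ι]

def tensorPow (U : Matrix ι ι R) (n : ℕ) : Matrix (Fin n → ι) (Fin n → ι) R :=
  fun I J => ∏ t, U (I t) (J t)

theorem tensorPow_mul_conjTranspose [StarRing R] [DecidableEq ι] {U : Matrix ι ι R}
    (hU : U * Uᴴ = 1) (n : ℕ) : tensorPow U n * (tensorPow U n)ᴴ = 1 := by
  ext I I'
  have hrow (i i' : ι) : ∑ j, U i j * star (U i' j) = (1 : Matrix ι ι R) i i' := by
    rw [← hU, mul_apply]; rfl
  calc (tensorPow U n * (tensorPow U n)ᴴ) I I'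
      = ∑ J : Fin n → ι, ∏ t, U (I t) (J t) * star (U (I' t) (J t)) := by
        simp only [mul_apply, conjTranspose_apply, tensorPow, star_prod, prod_mul_distrib]
    _ = ∏ t, (1 : Matrix ι ι R) (I t) (I' t) := by
        rw [← Fintype.prod_sum (fun t j => U (I t) j * star (U (I' t) j))]
        exact prod_congr rfl fun t _ => hrow _ _
    _ = (1 : Matrix (Fin n → ι) (Fin n → ι) R) I I' := by
        simp only [one_apply, prod_boole, mem_univ, true_imp_iff, funext_iff]

def firstSlice {n : ℕ} (u : (Fin (n + 1) → ι) → R) (i : ι) : (Fin n → ι) → R :=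
  fun K => u (Fin.cons i K)

theorem firstSlice_vecMul_tensorPow {n : ℕ} (U : Matrix ι ι R) (u : (Fin (n + 1) → ι) → R)
    (a : ι) :
    firstSlice (u ᵥ* tensorPow U (n + 1)) a = ∑ i, U i a • (firstSlice u i ᵥ* tensorPow U n) := by
  ext L
  simp only [firstSlice, vecMul, dotProduct, tensorPow, sum_pi_fin_succ, Fin.prod_univ_succ,
    Fin.cons_zero, Fin.cons_succ, Finset.sum_apply, Pi.smul_apply, smul_eq_mul, mul_sum]
  exact sum_congr rfl fun i _ => sum_congr rfl fun K _ => by ring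

variable [StarRing R]

/-- The paper's `Σ'_K Σ_{i,j} B_{ij} u_{iK} conj (u_{jK})`, but summed over all tuples `K`, not
only increasing ones. -/
def firstSlotForm {n : ℕ} (B : Matrix ι ι R) (u : (Fin (n + 1) → ι) → R) : R :=
  ∑ K : Fin n → ι, ∑ i, ∑ j, B i j * u (Fin.cons i K) * star (u (Fin.cons j K))

theorem firstSlotForm_eq_sum_dotProduct {n : ℕ} (B : Matrix ι ι R) (u : (Fin (n + 1) → ι) → R) :
    firstSlotForm B u = ∑ i, ∑ j, B i j * (firstSlice u i ⬝ᵥ star (firstSlice u j)) := by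
  simp only [firstSlotForm, firstSlice, dotProduct, Pi.star_apply, mul_sum, ← mul_assoc]
  rw [sum_comm]
  exact sum_congr rfl fun _ _ => sum_comm

theorem firstSlotForm_vecMul_tensorPow [DecidableEq ι] {n : ℕ} {U : Matrix ι ι R}
    (hU : U * Uᴴ = 1) (B : Matrix ι ι R) (u : (Fin (n + 1) → ι) → R) :
    firstSlotForm B (u ᵥ* tensorPow U (n + 1)) = firstSlotForm (U * B * Uᴴ) u := by
  calc firstSlotForm B (u ᵥ* tensorPow U (n + 1))
      = ∑ a, ∑ b, ∑ i, ∑ j,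
          U i a * B a b * star (U j b) * (firstSlice u i ⬝ᵥ star (firstSlice u j)) := by
        simp only [firstSlotForm_eq_sum_dotProduct, firstSlice_vecMul_tensorPow, star_sum,
          star_smul, sum_dotProduct, smul_dotProduct]
        simp only [dotProduct_sum, dotProduct_smul, smul_eq_mul, mul_sum,
          vecMul_dotProduct_star_vecMul (tensorPow_mul_conjTranspose hU n)]
        refine sum_congr rfl fun _ _ => sum_congr rfl fun _ _ =>
          sum_congr rfl fun _ _ => sum_congr rfl fun _ _ => by ring
    _ = ∑ i, ∑ j, ∑ a, ∑ b,
          U i a * B a b * star (U j b) * (firstSlice u i ⬝ᵥ star (firstSlice u j)) :=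
        sum_comm₄ _
    _ = firstSlotForm (U * B * Uᴴ) u := by
        simp only [firstSlotForm_eq_sum_dotProduct, mul_mul_apply_eq_sum_sum, conjTranspose_apply,
          sum_mul]

theorem firstSlotForm_diagonal [DecidableEq ι] {n : ℕ} (d : ι → R) (u : (Fin (n + 1) → ι) → R) :
    firstSlotForm (diagonal d) u = ∑ J, d (J 0) * (u J * star (u J)) := by
  simp only [firstSlotForm, diagonal_apply, ite_mul, zero_mul, sum_ite_eq, mem_univ, if_true,
    sum_pi_fin_succ, Fin.cons_zero, mul_assoc]
  exact sum_comm

end TensorPow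

def IsAlternating {M ι : Type*} [AddCommGroup M] {n : ℕ} (u : (Fin n → ι) → M) : Prop :=
  ∀ (J : Fin n → ι) (σ : Equiv.Perm (Fin n)), u (J ∘ σ) = (Equiv.Perm.sign σ : ℤ) • u J

namespace IsAlternating

variable {ι : Type*} {n : ℕ}

theorem eq_zero_of_not_injective {M : Type*} [AddCommGroup M] [IsAddTorsionFree M]
    {u : (Fin n → ι) → M} (hu : IsAlternating u) {J : Fin n → ι} (hJ : ¬Function.Injective J) :
    u J = 0 := by
  obtain ⟨a, b, hab, hne⟩ := Function.not_injective_iff.mp hJ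
  have := hu J (Equiv.swap a b)
  rwa [show J ∘ Equiv.swap a b = J by simp [Equiv.comp_swap_eq_update, hab],
    Equiv.Perm.sign_swap hne, Units.val_neg, Units.val_one, neg_smul, one_smul, self_eq_neg] at this

theorem norm_comp_perm {E : Type*} [NormedAddCommGroup E] {u : (Fin n → ι) → E}
    (hu : IsAlternating u) (J : Fin n → ι) (σ : Equiv.Perm (Fin n)) : ‖u (J ∘ σ)‖ = ‖u J‖ := by
  rw [hu, ← Units.smul_def, norm_units_zsmul]

theorem mul_star_comp_perm {R : Type*} [CommRing R] [StarRing R] {x y : (Fin n → ι) → R}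
    (hx : IsAlternating x) (hy : IsAlternating y) (J : Fin n → ι) (σ : Equiv.Perm (Fin n)) :
    x (J ∘ σ) * star (y (J ∘ σ)) = x J * star (y J) := by
  rw [hx, hy, star_zsmul, smul_mul_smul_comm, ← Units.val_mul, Int.units_mul_self, Units.val_one,
    one_smul]

theorem firstSlice {R : Type*} [CommRing R] {u : (Fin (n + 1) → ι) → R} (hu : IsAlternating u)
    (i : ι) : IsAlternating (firstSlice u i) := by
  intro K σ
  have hcons : (Fin.cons i K : Fin (n + 1) → ι) ∘ Equiv.Perm.decomposeFin.symm (0, σ) =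
      Fin.cons i (K ∘ σ) := by
    ext t
    refine Fin.cases ?_ (fun s => ?_) t <;> simp [Equiv.Perm.decomposeFin_symm_apply_succ]
  change u (Fin.cons i (K ∘ σ)) = _
  rw [← hcons, hu]
  simp [_root_.firstSlice]

theorem vecMul_tensorPow {R : Type*} [CommRing R] [Fintype ι] {u : (Fin n → ι) → R}
    (hu : IsAlternating u) (U : Matrix ι ι R) : IsAlternating (u ᵥ* tensorPow U n) := by
  intro J σ
  simp only [vecMul, dotProduct, tensorPow]
  rw [← sum_comp_perm σ, smul_sum]
  refine sum_congr rfl fun I _ => ?_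
  rw [hu, smul_mul_assoc]
  congr 2
  exact Equiv.prod_comp σ fun t => U (I t) (J t)

end IsAlternating

theorem sum_eq_factorial_smul_sum_strictMono {α M : Type*} [LinearOrder α] [Fintype α]
    [AddCommMonoid M] {n : ℕ} (f : (Fin n → α) → M)
    (hperm : ∀ (J : Fin n → α) (σ : Equiv.Perm (Fin n)), f (J ∘ σ) = f J)
    (hzero : ∀ J, ¬Function.Injective J → f J = 0) :
    ∑ I, f I = n.factorial • ∑ J ∈ univ.filter (fun J : Fin n → α => StrictMono J), f J := by
  classical
  calc ∑ I, f I = ∑ I ∈ univ.filter (fun I : Fin n → α => Function.Injective I), f I :=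
        (sum_filter_of_ne fun I _ hI => not_not.mp (mt (hzero I) hI)).symm
    _ = ∑ p ∈ univ.filter (fun J : Fin n → α => StrictMono J) ×ˢ (univ : Finset (Equiv.Perm _)),
          f (p.1 ∘ p.2) := by
        -- `(J, σ) ↦ J ∘ σ` is inverted by sorting: `I ↦ (I ∘ sort I, (sort I)⁻¹)`
        refine (sum_nbij' (fun p : (Fin n → α) × Equiv.Perm (Fin n) => p.1 ∘ p.2)
          (fun I : Fin n → α => (I ∘ Tuple.sort I, (Tuple.sort I)⁻¹))
          ?_ ?_ ?_ ?_ fun _ _ => rfl).symm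
        · simp only [mem_product, mem_filter, mem_univ, true_and, and_true]
          exact fun ⟨J, σ⟩ hJ => hJ.injective.comp σ.injective
        · simp only [mem_product, mem_filter, mem_univ, true_and, and_true]
          exact fun I hI => (Tuple.monotone_sort I).strictMono_of_injective
            (hI.comp (Tuple.sort I).injective)
        · rintro ⟨J, σ⟩ hJ
          replace hJ : StrictMono J := by simpa using hJ
          have hsort : (J ∘ σ) ∘ ⇑σ⁻¹ = (J ∘ σ) ∘ Tuple.sort (J ∘ σ) :=
            Tuple.comp_sort_eq_comp_iff_monotone.mpr
              (by simpa [Function.comp_assoc] using hJ.monotone)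
          have hσ : Tuple.sort (J ∘ σ) = σ⁻¹ :=
            DFunLike.coe_injective ((hJ.injective.comp σ.injective).comp_left hsort).symm
          simp [hσ, Function.comp_assoc]
        · intro I _
          simp [Function.comp_assoc]
    _ = n.factorial • ∑ J ∈ univ.filter (fun J : Fin n → α => StrictMono J), f J := by
        rw [sum_product, smul_sum]
        refine sum_congr rfl fun J _ => ?_
        simp [hperm, Fintype.card_perm]

theorem le_sum_of_card_le {ι : Type*} [DecidableEq ι] (f : ι → ℝ) {q : ℕ} {c : ℝ} (hc : 0 < c)
    (h : ∀ s : Finset ι, s.card = q → c ≤ ∑ j ∈ s, f j) {s : Finset ι} (hs : q ≤ s.card) :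
    c ≤ ∑ j ∈ s, f j := by
  induction s using Finset.strongInduction with
  | H s ih =>
    rcases hs.eq_or_lt with hs | hs
    · exact h s hs.symm
    obtain ⟨a, ha, hmax⟩ := s.exists_max_image f (card_pos.mp (by omega))
    have herase : c ≤ ∑ j ∈ s.erase a, f j :=
      ih _ (erase_ssubset ha) (by rw [card_erase_of_mem ha]; omega)
    -- `f a` is the maximum of `f` on `s`, and `f` is positive somewhere on `s.erase a`
    obtain ⟨b, hb, hpos⟩ := exists_lt_of_sum_lt (f := fun _ => (0 : ℝ)) (g := f)
      (by simpa using hc.trans_le herase)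
    have := hmax b (mem_of_mem_erase hb)
    rw [← sum_erase_add s f ha]
    linarith

section Eigenvalues

variable {ι : Type*} [Fintype ι]

theorem sum_apply_mul_eq_sum_apply_zero_mul {k : ℕ} (f : ι → ℝ) (w : (Fin (k + 1) → ι) → ℝ)
    (hw : ∀ (J : Fin (k + 1) → ι) (σ : Equiv.Perm (Fin (k + 1))), w (J ∘ σ) = w J)
    (t : Fin (k + 1)) :
    ∑ J, f (J t) * w J = ∑ J, f (J 0) * w J := by
  rw [← sum_comp_perm (Equiv.swap 0 t)]
  simp only [Function.comp_apply, Equiv.swap_apply_right, hw]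

theorem le_sum_sub_sum_apply_of_injective [DecidableEq ι] (f : ι → ℝ) {q k : ℕ} {c : ℝ}
    (hc : 0 < c) (h : ∀ s : Finset ι, s.card = q → c ≤ ∑ j ∈ s, f j) (hk : k + q ≤ Fintype.card ι)
    {J : Fin k → ι} (hJ : Function.Injective J) :
    c ≤ ∑ a, f a - ∑ t, f (J t) := by
  have hcard : q ≤ (univ \ univ.image J).card := by
    rw [card_sdiff_of_subset (subset_univ _), card_univ, card_image_of_injective _ hJ, card_univ,
      Fintype.card_fin]
    omega
  rw [← sum_image fun _ _ _ _ h => hJ h, ← sum_sdiff (subset_univ (univ.image J))]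
  simpa using le_sum_of_card_le f hc h hcard

theorem mul_sum_le_sum_mul_sum_sub_sum_apply_zero_mul [DecidableEq ι] (f : ι → ℝ) {q k : ℕ}
    {c : ℝ} (hc : 0 < c) (h : ∀ s : Finset ι, s.card = q → c ≤ ∑ j ∈ s, f j)
    (hk : k + 1 + q ≤ Fintype.card ι) (w : (Fin (k + 1) → ι) → ℝ) (hw0 : ∀ J, 0 ≤ w J)
    (hperm : ∀ (J : Fin (k + 1) → ι) (σ : Equiv.Perm (Fin (k + 1))), w (J ∘ σ) = w J)
    (hzero : ∀ J, ¬Function.Injective J → w J = 0) :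
    c * ∑ J, w J ≤ (∑ a, f a) * ∑ J, w J - (k + 1) * ∑ J, f (J 0) * w J := by
  have hsym : (k + 1) * ∑ J, f (J 0) * w J = ∑ J, (∑ t, f (J t)) * w J := by
    calc (k + 1) * ∑ J, f (J 0) * w J = ∑ t : Fin (k + 1), ∑ J, f (J t) * w J := by
          simp [sum_apply_mul_eq_sum_apply_zero_mul f w hperm]
      _ = ∑ J, (∑ t, f (J t)) * w J := by
          simp only [sum_mul]
          exact sum_comm
  have hJ (J : Fin (k + 1) → ι) : c * w J ≤ (∑ a, f a - ∑ t, f (J t)) * w J := by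
    by_cases hJ : Function.Injective J
    · exact mul_le_mul_of_nonneg_right (le_sum_sub_sum_apply_of_injective f hc h hk hJ) (hw0 J)
    · simp [hzero J hJ]
  rw [hsym, mul_sum, mul_sum, ← sum_sub_distrib]
  exact sum_le_sum fun J _ => (hJ J).trans_eq (by ring)

theorem dotProduct_star_self_eq_sum_norm_sq {𝕜 : Type*} [RCLike 𝕜] (x : ι → 𝕜) :
    x ⬝ᵥ star x = ((∑ i, ‖x i‖ ^ 2 : ℝ) : 𝕜) := by
  simp [dotProduct, RCLike.star_def, RCLike.mul_conj]

theorem Matrix.IsHermitian.mul_sum_norm_sq_le {𝕜 : Type*} [RCLike 𝕜] [DecidableEq ι]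
    {A : Matrix ι ι 𝕜} (hA : A.IsHermitian) {q k : ℕ} {c : ℝ} (hc : 0 < c)
    (heig : ∀ s : Finset ι, s.card = q → c ≤ ∑ j ∈ s, hA.eigenvalues j)
    (hk : k + 1 + q ≤ Fintype.card ι) {u : (Fin (k + 1) → ι) → 𝕜} (hu : IsAlternating u) :
    c * ∑ J, ‖u J‖ ^ 2 ≤
      RCLike.re A.trace * ∑ J, ‖u J‖ ^ 2 - (k + 1) * RCLike.re (firstSlotForm A u) := by
  set U : Matrix ι ι 𝕜 := (hA.eigenvectorUnitary : Matrix ι ι 𝕜)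
  have hU : U * Uᴴ = 1 := mem_unitaryGroup_iff.mp hA.eigenvectorUnitary.2
  set v := u ᵥ* tensorPow U (k + 1)
  have hv : IsAlternating v := hu.vecMul_tensorPow U
  have hnorm : ∑ J, ‖v J‖ ^ 2 = ∑ J, ‖u J‖ ^ 2 := by
    have := vecMul_dotProduct_star_vecMul (tensorPow_mul_conjTranspose hU (k + 1)) u u
    rwa [dotProduct_star_self_eq_sum_norm_sq, dotProduct_star_self_eq_sum_norm_sq,
      RCLike.ofReal_inj] at this
  have hform : RCLike.re (firstSlotForm A u) = ∑ J, hA.eigenvalues (J 0) * ‖v J‖ ^ 2 := by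
    have hAU : A = U * diagonal (RCLike.ofReal ∘ hA.eigenvalues) * Uᴴ := by
      conv_lhs => rw [hA.spectral_theorem, Unitary.conjStarAlgAut_apply]
      rfl
    conv_lhs => rw [hAU, ← firstSlotForm_vecMul_tensorPow hU, firstSlotForm_diagonal]
    simp [RCLike.star_def, RCLike.mul_conj, v]
  have htrace : RCLike.re A.trace = ∑ a, hA.eigenvalues a := by
    simp [hA.trace_eq_sum_eigenvalues]
  have := mul_sum_le_sum_mul_sum_sub_sum_apply_zero_mul hA.eigenvalues hc heig hk
    (fun J => ‖v J‖ ^ 2) (fun J => by positivity) (fun J σ => by rw [hv.norm_comp_perm])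
    (fun J hJ => by simp [hv.eq_zero_of_not_injective hJ])
  rwa [hnorm, ← hform, ← htrace] at this

end Eigenvalues

theorem levi_form_lower_bound_low_degree_general
    (m q k : ℕ) (ε : ℝ) (hε : 0 < ε) (hkm : k + 1 ≤ m - q)
    (A : Matrix (Fin m) (Fin m) ℂ) (hA : A.IsHermitian)
    (heig : ∀ s : Finset (Fin m), s.card = q → ε⁻¹ ≤ ∑ j ∈ s, hA.eigenvalues j)
    (u : (Fin (k + 1) → Fin m) → ℂ)
    (halt : ∀ (J : Fin (k + 1) → Fin m) (σ : Equiv.Perm (Fin (k + 1))),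
      u (J ∘ σ) = (Equiv.Perm.sign σ : ℤ) • u J) :
    ε⁻¹ * ∑ J ∈ Finset.univ.filter (fun J : Fin (k + 1) → Fin m => StrictMono J),
        ‖u J‖ ^ 2 ≤
      (A.trace.re) *
          ∑ J ∈ Finset.univ.filter (fun J : Fin (k + 1) → Fin m => StrictMono J),
            ‖u J‖ ^ 2 -
        (∑ K ∈ Finset.univ.filter (fun K : Fin k → Fin m => StrictMono K), ∑ i, ∑ j,
            A i j * u (Fin.cons i K) * starRingEnd ℂ (u (Fin.cons j K))).re := by
  have hu : IsAlternating u := halt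
  have hfull := hA.mul_sum_norm_sq_le (inv_pos.mpr hε) heig (by rw [Fintype.card_fin]; omega) hu
  have hnorm : ∑ J, ‖u J‖ ^ 2 = (k + 1).factorial •
      ∑ J ∈ Finset.univ.filter (fun J : Fin (k + 1) → Fin m => StrictMono J), ‖u J‖ ^ 2 :=
    sum_eq_factorial_smul_sum_strictMono _ (fun J σ => by rw [hu.norm_comp_perm])
      fun J hJ => by simp [hu.eq_zero_of_not_injective hJ]
  have hform : firstSlotForm A u = k.factorial •
      ∑ K ∈ Finset.univ.filter (fun K : Fin k → Fin m => StrictMono K), ∑ i, ∑ j,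
        A i j * u (Fin.cons i K) * starRingEnd ℂ (u (Fin.cons j K)) :=
    sum_eq_factorial_smul_sum_strictMono _
      (fun K σ => by
        simp only [mul_assoc]
        exact sum_congr rfl fun i _ => sum_congr rfl fun j _ => congrArg (A i j * ·)
          ((hu.firstSlice i).mul_star_comp_perm (hu.firstSlice j) K σ))
      fun K hK => sum_eq_zero fun i _ => sum_eq_zero fun j _ => by
        simp [show u (Fin.cons i K) = 0 from (hu.firstSlice i).eq_zero_of_not_injective hK]
  rw [hnorm, hform, nsmul_eq_mul, nsmul_eq_mul, Nat.factorial_succ] at hfull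
  rw [RCLike.re_to_complex, RCLike.re_to_complex, ← Complex.ofReal_natCast,
    Complex.re_ofReal_mul] at hfull
  have hpos : (0 : ℝ) < (k + 1) * k.factorial := by positivity
  refine le_of_mul_le_mul_left ?_ hpos
  push_cast at hfull
  linarith

/-- dual lemma for low degrees. If `A` is Hermitian with the sum of its `q`
smallest eigenvalues at least `ε⁻¹` (equivalently: every `q` of its eigenvalues sum to at
least `ε⁻¹`), then for antisymmetric `(0,k)`-form coefficients `u` (degree `k+1` here)
with `k + 1 ≤ m - q`, one has
`(Tr A) Σ'_{|J|=k+1} |u_J|² − Σ'_{|K|=k} Σ_{i,j} A_{ij} u_{iK} conj (u_{jK})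
  ≥ ε⁻¹ Σ'_{|J|=k+1} |u_J|²`. -/
theorem levi_form_lower_bound_low_degree
    (m q k : ℕ) (ε : ℝ) (hε : 0 < ε) (hq : 1 ≤ q) (hkm : k + 1 ≤ m - q)
    (A : Matrix (Fin m) (Fin m) ℂ) (hA : A.IsHermitian)
    (heig : ∀ s : Finset (Fin m), s.card = q → ε⁻¹ ≤ ∑ j ∈ s, hA.eigenvalues j)
    (u : (Fin (k + 1) → Fin m) → ℂ)
    (halt : ∀ (J : Fin (k + 1) → Fin m) (σ : Equiv.Perm (Fin (k + 1))),
      u (J ∘ σ) = (Equiv.Perm.sign σ : ℤ) • u J) :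
    ε⁻¹ * ∑ J ∈ Finset.univ.filter (fun J : Fin (k + 1) → Fin m => StrictMono J),
        ‖u J‖ ^ 2 ≤
      (A.trace.re) *
          ∑ J ∈ Finset.univ.filter (fun J : Fin (k + 1) → Fin m => StrictMono J),
            ‖u J‖ ^ 2 -
        (∑ K ∈ Finset.univ.filter (fun K : Fin k → Fin m => StrictMono K), ∑ i, ∑ j,
            A i j * u (Fin.cons i K) * starRingEnd ℂ (u (Fin.cons j K))).re :=
  levi_form_lower_bound_low_degree_general m q k ε hε hkm A hA heig u halt
end

section
/- Let H, H' be Hilbert spaces and T : dom T ⊆ H → H' closed densely defined, with 𝓗 = ker T ∩ ker T* finite dimensional. Suppose □ = T*T + TT* (the Kohn Laplacian, as the self-adjoint operator associated to the quadratic form Q(u) = ‖Tu‖² + ‖T*u‖²) satisfies: for every ε > 0 there is C_ε with ‖u‖² ≤ ε Q(u) + C_ε ‖ι u‖²_{-1} for all u in the form domain, where ι : H → H^{-1} is compact. Then □ restricted to 𝓗^⟂ has a bounded inverse G, and G is a compact operator on 𝓗^⟂. -/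
/-!
Via `Re⟪□u, u⟫ ≤ ‖□u‖ ‖u‖`, the compactness estimate becomes `‖u‖ ≤ δ ‖□u‖ + C_δ ‖ι u‖` for
every `δ > 0`; since `ι` is compact, every set bounded in the graph norm of `□` is then totally
bounded in `H`. On `dom □ ∩ 𝓗ᗮ` the operator `□` is injective, because `□u = 0` forces
`Q(u) = 0`. A sequence of unit vectors with `□uₙ → 0` would therefore have a convergent
subsequence whose limit, `□` being closed, is a unit vector in the kernel; hence
`‖u‖ ≤ c ‖□u‖`. So `□` has closed range and a bounded inverse on it, and composing that inverse
with the orthogonal projection onto the range gives `G`. It maps the unit ball into a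
graph-bounded set, so it is compact.
-/

open Filter Topology

theorem Submodule.mem_orthogonal_span_of_forall_inner_eq_zero {𝕜 H : Type*} [RCLike 𝕜]
    [NormedAddCommGroup H] [InnerProductSpace 𝕜 H] {s : Set H} {u : H}
    (h : ∀ v ∈ s, inner 𝕜 u v = 0) : u ∈ (span 𝕜 s)ᗮ :=
  isOrtho_iff_le.1 (isOrtho_span.2 fun _ hu' v hv => Set.mem_singleton_iff.1 hu' ▸ h v hv)
    (mem_span_singleton_self u)

namespace LinearPMap

variable {𝕜 E F W : Type*} [RCLike 𝕜]
  [NormedAddCommGroup E] [NormedSpace 𝕜 E] [NormedAddCommGroup F] [NormedSpace 𝕜 F]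
  [NormedAddCommGroup W] [NormedSpace 𝕜 W]

def HasCompactnessEstimate (A : E →ₗ.[𝕜] F) (ι : E →L[𝕜] W) : Prop :=
  ∀ δ > (0 : ℝ), ∃ C ≥ (0 : ℝ), ∀ x : A.domain, ‖(x : E)‖ ≤ δ * ‖A x‖ + C * ‖ι x‖

variable {A : E →ₗ.[𝕜] F} {ι : E →L[𝕜] W}

theorem IsClosed.exists_of_tendsto (hA : A.IsClosed) {x : ℕ → A.domain} {u : E} {f : F}
    (hxu : Tendsto (fun n => (x n : E)) atTop (𝓝 u))
    (hxf : Tendsto (fun n => A (x n)) atTop (𝓝 f)) :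
    ∃ y : A.domain, (y : E) = u ∧ A y = f :=
  A.mem_graph_iff.1 <| hA.mem_of_tendsto (hxu.prodMk_nhds hxf) <|
    Eventually.of_forall fun n => A.mem_graph (x n)

theorem IsClosed.domRestrict (hA : A.IsClosed) {K : Submodule 𝕜 E}
    (hK : _root_.IsClosed (K : Set E)) : (A.domRestrict K).IsClosed := by
  have hgraph : ((A.domRestrict K).graph : Set (E × F)) =
      (A.graph : Set (E × F)) ∩ Prod.fst ⁻¹' (K : Set E) := by
    ext ⟨u, f⟩
    simp only [SetLike.mem_coe, mem_graph_iff, Set.mem_inter_iff, Set.mem_preimage]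
    constructor
    · rintro ⟨y, rfl, rfl⟩
      exact ⟨⟨⟨y, y.2.2⟩, rfl, (domRestrict_apply rfl).symm⟩, y.2.1⟩
    · rintro ⟨⟨y, rfl, rfl⟩, hy⟩
      exact ⟨⟨y, hy, y.2⟩, rfl, domRestrict_apply rfl⟩
  unfold LinearPMap.IsClosed
  rw [hgraph]
  exact hA.inter (hK.preimage continuous_fst)

theorem IsClosed.isClosed_range [CompleteSpace E] (hA : A.IsClosed) {c : ℝ} (hc0 : 0 ≤ c)
    (hc : ∀ x : A.domain, ‖(x : E)‖ ≤ c * ‖A x‖) : _root_.IsClosed (Set.range A) := by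
  refine isSeqClosed_iff_isClosed.1 fun f y hf hfy => ?_
  choose x hx using hf
  obtain ⟨b, -, hb, hb0⟩ := cauchySeq_iff_le_tendsto_0.1 hfy.cauchySeq
  have hx_cauchy : CauchySeq fun n => (x n : E) := by
    refine cauchySeq_of_le_tendsto_0 (fun N => c * b N) (fun n m N hn hm => ?_)
      (by simpa using hb0.const_mul c)
    calc dist (x n : E) (x m) = ‖((x n - x m : A.domain) : E)‖ := by
          rw [Submodule.coe_sub, dist_eq_norm]
      _ ≤ c * ‖A (x n - x m)‖ := hc _
      _ ≤ c * b N := by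
        rw [LinearPMap.map_sub, hx, hx, ← dist_eq_norm]
        exact mul_le_mul_of_nonneg_left (hb n m N hn hm) hc0
  obtain ⟨u, hu⟩ := cauchySeq_tendsto_of_complete hx_cauchy
  obtain ⟨z, -, hz⟩ := hA.exists_of_tendsto hu (by simpa only [hx] using hfy)
  exact ⟨z, hz⟩

theorem HasCompactnessEstimate.domRestrict (hest : A.HasCompactnessEstimate ι)
    (K : Submodule 𝕜 E) : (A.domRestrict K).HasCompactnessEstimate ι := by
  intro δ hδ
  obtain ⟨C, hC, h⟩ := hest δ hδ
  exact ⟨C, hC, fun x => by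
    have hx : A.domRestrict K x = A ⟨x, x.2.2⟩ := domRestrict_apply rfl
    rw [hx]
    exact h ⟨x, x.2.2⟩⟩

theorem HasCompactnessEstimate.totallyBounded (hest : A.HasCompactnessEstimate ι)
    (hι : IsCompactOperator ι) (R : ℝ) :
    TotallyBounded (Subtype.val '' {x : A.domain | ‖(x : E)‖ ≤ R ∧ ‖A x‖ ≤ R}) := by
  set s := Subtype.val '' {x : A.domain | ‖(x : E)‖ ≤ R ∧ ‖A x‖ ≤ R}
  have hιs : TotallyBounded (ι '' s) := by
    refine (hι.isCompact_closure_image_closedBall R).totallyBounded.subset ?_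
    rintro _ ⟨_, ⟨x, hx, rfl⟩, rfl⟩
    exact subset_closure ⟨x, by simpa using hx.1, rfl⟩
  refine totallyBounded_iff_ultrafilter.2 fun f hf => ?_
  have hιf : Cauchy (map ι f) := totallyBounded_iff_ultrafilter.1 hιs (f.map ι) <| by
    rw [Ultrafilter.coe_map, ← map_principal]
    exact map_mono hf
  refine Metric.cauchy_iff.2 ⟨f.neBot, fun ε hε => ?_⟩
  -- each of the two terms of the estimate for `x - x'` will contribute less than `ε / 2`
  set δ := ε / (4 * (|R| + 1))
  obtain ⟨C, hC, hδC⟩ := hest δ (by positivity)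
  set r := ε / (2 * (C + 1))
  obtain ⟨V, hV, hVr⟩ := (Metric.cauchy_iff.1 hιf).2 r (by positivity)
  refine ⟨ι ⁻¹' V ∩ s, inter_mem hV (le_principal_iff.1 hf), ?_⟩
  rintro _ ⟨hxV, x, hx, rfl⟩ _ ⟨hx'V, x', hx', rfl⟩
  have hA : ‖A (x - x')‖ ≤ 2 * (|R| + 1) := by
    rw [LinearPMap.map_sub]
    linarith [norm_sub_le (A x) (A x'), hx.2, hx'.2, le_abs_self R]
  have hι' : ‖ι ((x - x' : A.domain) : E)‖ ≤ r := by
    rw [Submodule.coe_sub, ι.map_sub, ← dist_eq_norm]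
    exact (hVr _ hxV _ hx'V).le
  calc dist (x : E) x' = ‖((x - x' : A.domain) : E)‖ := by rw [Submodule.coe_sub, dist_eq_norm]
    _ ≤ δ * ‖A (x - x')‖ + C * ‖ι ((x - x' : A.domain) : E)‖ := hδC _
    _ ≤ δ * (2 * (|R| + 1)) + C * r := by gcongr
    _ < ε := by
      have hδR : δ * (2 * (|R| + 1)) = ε / 2 := by
        simp only [δ]
        field_simp
        ring
      have hCr : (C + 1) * r = ε / 2 := by
        simp only [r]
        field_simp
      have hr : 0 < r := by positivity
      nlinarith

theorem HasCompactnessEstimate.exists_norm_le_mul_norm [CompleteSpace E]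
    (hest : A.HasCompactnessEstimate ι) (hι : IsCompactOperator ι) (hA : A.IsClosed)
    (hinj : Function.Injective A) : ∃ c > 0, ∀ x : A.domain, ‖(x : E)‖ ≤ c * ‖A x‖ := by
  by_contra! hcon
  have hunit : ∀ n : ℕ, ∃ v : A.domain, ‖(v : E)‖ = 1 ∧ ‖A v‖ < 1 / (n + 1) := by
    intro n
    obtain ⟨x, hx⟩ := hcon (n + 1) (by positivity)
    have hx0 : 0 < ‖(x : E)‖ := lt_of_le_of_lt (by positivity) hx
    refine ⟨((‖(x : E)‖⁻¹ : ℝ) : 𝕜) • x, ?_, ?_⟩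
    · simp [norm_smul, hx0.ne']
    · rw [LinearPMap.map_smul, norm_smul, RCLike.norm_ofReal, abs_inv, abs_norm,
        inv_mul_lt_iff₀ hx0, mul_one_div, lt_div_iff₀ (by positivity)]
      linarith
  choose v hv_norm hv_A using hunit
  have hv_mem : ∀ n, (v n : E) ∈ Subtype.val '' {x : A.domain | ‖(x : E)‖ ≤ 1 ∧ ‖A x‖ ≤ 1} :=
    fun n => ⟨v n, ⟨(hv_norm n).le, (hv_A n).le.trans <| by
      rw [div_le_one (by positivity)]; linarith [n.cast_nonneg (α := ℝ)]⟩, rfl⟩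
  obtain ⟨u, -, φ, hφ, hvu⟩ := ((hest.totallyBounded hι 1).closure.isCompact_of_isClosed
    isClosed_closure).tendsto_subseq fun n => subset_closure (hv_mem n)
  have hAv : Tendsto (fun n => A (v (φ n))) atTop (𝓝 0) :=
    squeeze_zero_norm (fun n => (hv_A (φ n)).le)
      (tendsto_one_div_add_atTop_nhds_zero_nat.comp hφ.tendsto_atTop)
  obtain ⟨y, rfl, hy⟩ := hA.exists_of_tendsto hvu hAv
  have hy_norm : ‖(y : E)‖ = 1 :=
    tendsto_nhds_unique hvu.norm (by simp only [Function.comp_def, hv_norm, tendsto_const_nhds])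
  rw [hinj (hy.trans A.map_zero.symm)] at hy_norm
  simp at hy_norm

section InnerProductSpace

variable {H : Type*} [NormedAddCommGroup H] [InnerProductSpace 𝕜 H]

theorem hasCompactnessEstimate_of_sq_le {A : H →ₗ.[𝕜] H} {ι : H →L[𝕜] W}
    (h : ∀ ε > (0 : ℝ), ∃ C > (0 : ℝ), ∀ x : A.domain,
      ‖(x : H)‖ ^ 2 ≤ ε * RCLike.re (inner 𝕜 (A x) (x : H)) + C * ‖ι x‖ ^ 2) :
    A.HasCompactnessEstimate ι := by
  intro δ hδ
  obtain ⟨C, hC, hx⟩ := h δ hδ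
  refine ⟨√C, Real.sqrt_nonneg C, fun x => ?_⟩
  have hsq : ‖(x : H)‖ ^ 2 ≤ δ * (‖A x‖ * ‖(x : H)‖) + √C ^ 2 * ‖ι x‖ ^ 2 := by
    rw [Real.sq_sqrt hC.le]
    exact (hx x).trans (by gcongr; exact re_inner_le_norm (A x) (x : H))
  by_contra! hlt
  have hCι : √C * ‖ι x‖ ≤ ‖(x : H)‖ := by
    linarith [mul_nonneg hδ.le (norm_nonneg (A x))]
  have hx0 : 0 < ‖(x : H)‖ := lt_of_le_of_lt (by positivity) hlt
  nlinarith [mul_lt_mul_of_pos_right hlt hx0,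
    mul_nonneg (mul_nonneg (Real.sqrt_nonneg C) (norm_nonneg (ι x))) (sub_nonneg.2 hCι)]

theorem injective_domRestrict_orthogonal {K : Submodule 𝕜 H} {A : H →ₗ.[𝕜] F}
    (hK : ∀ x : A.domain, A x = 0 → (x : H) ∈ K) : Function.Injective (A.domRestrict Kᗮ) := by
  refine (injective_iff_map_eq_zero (A.domRestrict Kᗮ).toFun).2 fun x hx => ?_
  have hxK : (x : H) ∈ K := hK ⟨x, x.2.2⟩ <| by rwa [← domRestrict_apply rfl]
  exact Subtype.ext <| (Submodule.mem_bot 𝕜).1 <| K.inf_orthogonal_eq_bot ▸ ⟨hxK, x.2.1⟩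

theorem HasCompactnessEstimate.exists_isCompactOperator_leftInverse [CompleteSpace E]
    [CompleteSpace H] {A : E →ₗ.[𝕜] H} (hest : A.HasCompactnessEstimate ι)
    (hι : IsCompactOperator ι) (hA : A.IsClosed) (hinj : Function.Injective A) :
    ∃ G : H →L[𝕜] E, IsCompactOperator G ∧ ∀ x : A.domain, G (A x) = x := by
  obtain ⟨c, hc0, hc⟩ := hest.exists_norm_le_mul_norm hι hA hinj
  set R := LinearMap.range A.toFun
  have : CompleteSpace R := (hA.isClosed_range hc0.le hc).completeSpace_coe
  let e := LinearEquiv.ofInjective A.toFun hinj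
  have hAe : ∀ f : R, A (e.symm f) = f := fun f => by
    conv_rhs => rw [← e.apply_symm_apply f]
    rfl
  have he_le : ∀ f : R, ‖((e.symm f : A.domain) : E)‖ ≤ c * ‖f‖ := fun f => by
    simpa [hAe] using hc (e.symm f)
  let S : R →L[𝕜] E := (A.domain.subtype ∘ₗ e.symm.toLinearMap).mkContinuous c he_le
  have hS : IsCompactOperator S := by
    have hK := (hest.totallyBounded hι (max c 1)).closure.isCompact_of_isClosed isClosed_closure
    refine (isCompactOperator_iff_isCompact_closure_image_closedBall (S : R →ₗ[𝕜] E) one_pos).2 <|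
      hK.of_isClosed_subset isClosed_closure (closure_mono ?_)
    rintro _ ⟨f, hf, rfl⟩
    rw [mem_closedBall_zero_iff] at hf
    refine ⟨e.symm f, ⟨?_, ?_⟩, rfl⟩
    · calc ‖((e.symm f : A.domain) : E)‖ ≤ c * ‖f‖ := he_le f
        _ ≤ c * 1 := by gcongr
        _ ≤ max c 1 := by simp
    · rw [hAe]
      exact hf.trans (le_max_right _ _)
  refine ⟨S.comp R.orthogonalProjectionOnto, hS.comp_clm _, fun x => ?_⟩
  change S (R.orthogonalProjectionOnto (e x : H)) = x
  rw [R.orthogonalProjectionOnto_mem_subspace_eq_self]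
  exact congrArg Subtype.val (e.symm_apply_apply x)

end InnerProductSpace

end LinearPMap

theorem box_has_compact_inverse_general
    {H Hm : Type*}
    [NormedAddCommGroup H] [InnerProductSpace ℂ H] [CompleteSpace H]
    [NormedAddCommGroup Hm] [NormedSpace ℂ Hm]
    (ι : H →L[ℂ] Hm) (hι_compact : IsCompactOperator ι)
    (T : H →ₗ.[ℂ] H)
    (Box : H →ₗ.[ℂ] H) (hBox_sa : IsSelfAdjoint Box)
    (hdomT : ∀ u ∈ Box.domain, u ∈ T.domain)
    (hdomA : ∀ u ∈ Box.domain, u ∈ T.adjoint.domain)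
    (hBoxQ : ∀ (u : H) (hu : u ∈ Box.domain),
      (inner (𝕜 := ℂ) (Box ⟨u, hu⟩) u).re =
        ‖T ⟨u, hdomT u hu⟩‖ ^ 2 + ‖T.adjoint ⟨u, hdomA u hu⟩‖ ^ 2)
    (est : ∀ ε > (0 : ℝ), ∃ C > (0 : ℝ),
      ∀ (u : H) (huT : u ∈ T.domain) (huA : u ∈ T.adjoint.domain),
        ‖u‖ ^ 2 ≤ ε * (‖T ⟨u, huT⟩‖ ^ 2 + ‖T.adjoint ⟨u, huA⟩‖ ^ 2) + C * ‖ι u‖ ^ 2) :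
    ∃ G : H →L[ℂ] H, IsCompactOperator G ∧
      ∀ (u : H) (hu : u ∈ Box.domain),
        (∀ (v : H) (hvT : v ∈ T.domain) (hvA : v ∈ T.adjoint.domain),
            T ⟨v, hvT⟩ = 0 → T.adjoint ⟨v, hvA⟩ = 0 → inner (𝕜 := ℂ) u v = 0) →
        G (Box ⟨u, hu⟩) = u := by
  set 𝓗 := Submodule.span ℂ {v : H | ∃ (hvT : v ∈ T.domain) (hvA : v ∈ T.adjoint.domain),
    T ⟨v, hvT⟩ = 0 ∧ T.adjoint ⟨v, hvA⟩ = 0}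
  have hker : ∀ x : Box.domain, Box x = 0 → (x : H) ∈ 𝓗 := fun x hx => by
    have hQ := hBoxQ x x.2
    rw [hx, inner_zero_left, Complex.zero_re, eq_comm,
      add_eq_zero_iff_of_nonneg (by positivity) (by positivity)] at hQ
    exact Submodule.subset_span ⟨hdomT x x.2, hdomA x x.2, by simpa using hQ⟩
  have hest : Box.HasCompactnessEstimate ι := LinearPMap.hasCompactnessEstimate_of_sq_le
    fun ε hε => (est ε hε).imp fun C ⟨hC, h⟩ => ⟨hC, fun x => by
      simpa only [RCLike.re_to_complex, hBoxQ] using h x (hdomT x x.2) (hdomA x x.2)⟩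
  obtain ⟨G, hG, hGBox⟩ := (hest.domRestrict 𝓗ᗮ).exists_isCompactOperator_leftInverse hι_compact
    (hBox_sa.isClosed.domRestrict (Submodule.isClosed_orthogonal 𝓗))
    (LinearPMap.injective_domRestrict_orthogonal hker)
  refine ⟨G, hG, fun u hu horth => ?_⟩
  have hu𝓗 : u ∈ 𝓗ᗮ := Submodule.mem_orthogonal_span_of_forall_inner_eq_zero <| by
    rintro v ⟨hvT, hvA, hTv, hAv⟩
    exact horth v hvT hvA hTv hAv
  have hBu : Box.domRestrict 𝓗ᗮ ⟨u, hu𝓗, hu⟩ = Box ⟨u, hu⟩ := LinearPMap.domRestrict_apply rfl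
  rw [← hBu]
  exact hGBox _

/-- If the Kohn Laplacian `□` (the self-adjoint operator associated to the
form `Q(u) = ‖Tu‖² + ‖T†u‖²`) satisfies a compactness estimate and the harmonic space
`𝓗 = ker T ∩ ker T†` is finite-dimensional, then `□` has a bounded inverse `G` on `𝓗ᗮ`
which is a compact operator. -/
theorem box_has_compact_inverse
    {H Hm : Type*}
    [NormedAddCommGroup H] [InnerProductSpace ℂ H] [CompleteSpace H]
    [NormedAddCommGroup Hm] [NormedSpace ℂ Hm]
    (ι : H →L[ℂ] Hm) (hι_compact : IsCompactOperator ι) (hι_inj : Function.Injective ι)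
    (T : H →ₗ.[ℂ] H)
    (hT_closed : T.IsClosed) (hT_dense : Dense (T.domain : Set H))
    (Box : H →ₗ.[ℂ] H) (hBox_sa : IsSelfAdjoint Box)
    (hdomT : ∀ u ∈ Box.domain, u ∈ T.domain)
    (hdomA : ∀ u ∈ Box.domain, u ∈ T.adjoint.domain)
    (hBoxQ : ∀ (u : H) (hu : u ∈ Box.domain),
      (inner (𝕜 := ℂ) (Box ⟨u, hu⟩) u).re =
        ‖T ⟨u, hdomT u hu⟩‖ ^ 2 + ‖T.adjoint ⟨u, hdomA u hu⟩‖ ^ 2)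
    (h_fin : ∃ (n : ℕ) (b : Fin n → H),
      ∀ (v : H) (hvT : v ∈ T.domain) (hvA : v ∈ T.adjoint.domain),
        T ⟨v, hvT⟩ = 0 → T.adjoint ⟨v, hvA⟩ = 0 → v ∈ Submodule.span ℂ (Set.range b))
    (est : ∀ ε > (0 : ℝ), ∃ C > (0 : ℝ),
      ∀ (u : H) (huT : u ∈ T.domain) (huA : u ∈ T.adjoint.domain),
        ‖u‖ ^ 2 ≤ ε * (‖T ⟨u, huT⟩‖ ^ 2 + ‖T.adjoint ⟨u, huA⟩‖ ^ 2) + C * ‖ι u‖ ^ 2) :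
    ∃ G : H →L[ℂ] H, IsCompactOperator G ∧
      ∀ (u : H) (hu : u ∈ Box.domain),
        (∀ (v : H) (hvT : v ∈ T.domain) (hvA : v ∈ T.adjoint.domain),
            T ⟨v, hvT⟩ = 0 → T.adjoint ⟨v, hvA⟩ = 0 → inner (𝕜 := ℂ) u v = 0) →
        G (Box ⟨u, hu⟩) = u :=
  box_has_compact_inverse_general ι hι_compact T Box hBox_sa hdomT hdomA hBoxQ est
end

section
/- Let H be a Hilbert space, T closed densely defined on H, and P₁, P₂, P₃ bounded operators with P₁ + P₂ + P₃ = I, each commuting with T up to a bounded error: ‖[T, P_i]u‖ ≤ C₀‖u‖ on dom T. Suppose for each i there is an estimate ‖P_i u‖² ≤ ε(‖T P_i u‖² + ‖S P_i u‖²) + C_ε‖ι u‖²_{-1}, with S closed densely defined also satisfying ‖[S, P_i]u‖ ≤ C₀‖u‖. Then for ε small enough, ‖u‖² ≤ ε'(‖Tu‖² + ‖Su‖²) + C'_{ε'}‖ι u‖²_{-1} for all u ∈ dom T ∩ dom S, where ε' → 0 as ε → 0. -/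
/-!
The commutator bounds control the energy `‖T v‖² + ‖S v‖²` of each piece `v = P i u` by that of
`u` plus `‖u‖²`. Since `‖u‖² ≤ 3 ∑ ‖P i u‖²`, summing the three microlocal estimates bounds
`‖u‖²` by `δ (‖T u‖² + ‖S u‖² + ‖u‖²) + C ‖ι u‖²` up to constant factors, with `δ` proportional
to the microlocal `ε`; once `δ ≤ 1/2`, the `δ ‖u‖²` term is absorbed into the left-hand side.
-/

open Finset

theorem norm_sq_le_of_norm_sub_apply_le {𝕜 E F : Type*} [NontriviallyNormedField 𝕜]
    [SeminormedAddCommGroup E] [NormedSpace 𝕜 E] [SeminormedAddCommGroup F] [NormedSpace 𝕜 F]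
    (L : E →L[𝕜] F) {M c r : ℝ} (hL : ‖L‖ ≤ M) (hc : c ≤ M) (hr : 0 ≤ r) {x : F} {y : E}
    (h : ‖x - L y‖ ≤ c * r) :
    ‖x‖ ^ 2 ≤ 2 * M ^ 2 * (‖y‖ ^ 2 + r ^ 2) := by
  have hM : 0 ≤ M := (norm_nonneg L).trans hL
  have hx : ‖x‖ ≤ M * (‖y‖ + r) :=
    calc ‖x‖ ≤ ‖L y‖ + ‖x - L y‖ := norm_le_norm_add_norm_sub' x (L y)
      _ ≤ ‖L‖ * ‖y‖ + c * r := add_le_add (L.le_opNorm y) h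
      _ ≤ M * (‖y‖ + r) := by
        rw [mul_add]
        gcongr
  calc ‖x‖ ^ 2 ≤ (M * (‖y‖ + r)) ^ 2 := pow_le_pow_left₀ (norm_nonneg x) hx 2
    _ = M ^ 2 * (‖y‖ + r) ^ 2 := mul_pow M _ 2
    _ ≤ M ^ 2 * (2 * (‖y‖ ^ 2 + r ^ 2)) := by gcongr; exact add_sq_le
    _ = 2 * M ^ 2 * (‖y‖ ^ 2 + r ^ 2) := by ring

theorem norm_sum_sq_le_card_sq_mul {ι E : Type*} [SeminormedAddCommGroup E] {s : Finset ι}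
    {v : ι → E} {c : ℝ} (h : ∀ i ∈ s, ‖v i‖ ^ 2 ≤ c) :
    ‖∑ i ∈ s, v i‖ ^ 2 ≤ #s ^ 2 * c :=
  calc ‖∑ i ∈ s, v i‖ ^ 2 ≤ (∑ i ∈ s, ‖v i‖) ^ 2 :=
        pow_le_pow_left₀ (norm_nonneg _) (norm_sum_le s v) 2
    _ ≤ #s * ∑ i ∈ s, ‖v i‖ ^ 2 := sq_sum_le_card_mul_sum_sq
    _ ≤ #s * (#s • c) := by gcongr; exact sum_le_card_nsmul s _ c h
    _ = #s ^ 2 * c := by rw [nsmul_eq_mul]; ring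

theorem le_two_mul_of_le_mul_add {x y δ : ℝ} (hx : 0 ≤ x) (hδ : δ ≤ 1 / 2)
    (h : x ≤ δ * x + y) : x ≤ 2 * y := by
  nlinarith

theorem patching_microlocal_estimates_general
    {H H' H'' Hm : Type*}
    [NormedAddCommGroup H] [InnerProductSpace ℂ H]
    [NormedAddCommGroup H'] [InnerProductSpace ℂ H']
    [NormedAddCommGroup H''] [InnerProductSpace ℂ H'']
    [NormedAddCommGroup Hm] [NormedSpace ℂ Hm]
    (ι : H →L[ℂ] Hm)
    (T : H →ₗ.[ℂ] H') (S : H →ₗ.[ℂ] H'')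
    (P : Fin 3 → H →L[ℂ] H) (P' : Fin 3 → H' →L[ℂ] H') (P'' : Fin 3 → H'' →L[ℂ] H'')
    (hsum : ∀ u : H, P 0 u + P 1 u + P 2 u = u)
    (hPT : ∀ (i : Fin 3), ∀ u ∈ T.domain, P i u ∈ T.domain)
    (hPS : ∀ (i : Fin 3), ∀ u ∈ S.domain, P i u ∈ S.domain)
    (C₀ : ℝ)
    (hcommT : ∀ (i : Fin 3) (u : H) (hu : u ∈ T.domain),
      ‖T ⟨P i u, hPT i u hu⟩ - P' i (T ⟨u, hu⟩)‖ ≤ C₀ * ‖u‖)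
    (hcommS : ∀ (i : Fin 3) (u : H) (hu : u ∈ S.domain),
      ‖S ⟨P i u, hPS i u hu⟩ - P'' i (S ⟨u, hu⟩)‖ ≤ C₀ * ‖u‖)
    (hmicro : ∀ ε > (0 : ℝ), ∃ C > (0 : ℝ),
      ∀ (i : Fin 3) (u : H) (huT : u ∈ T.domain) (huS : u ∈ S.domain),
        ‖P i u‖ ^ 2 ≤
          ε * (‖T ⟨P i u, hPT i u huT⟩‖ ^ 2 + ‖S ⟨P i u, hPS i u huS⟩‖ ^ 2) +
            C * ‖ι u‖ ^ 2) :
    ∀ ε' > (0 : ℝ), ∃ C' > (0 : ℝ),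
      ∀ (u : H) (huT : u ∈ T.domain) (huS : u ∈ S.domain),
        ‖u‖ ^ 2 ≤ ε' * (‖T ⟨u, huT⟩‖ ^ 2 + ‖S ⟨u, huS⟩‖ ^ 2) + C' * ‖ι u‖ ^ 2 := by
  intro ε' hε'
  obtain ⟨M, hM, hP'M, hP''M, hC₀M⟩ :
      ∃ M > 0, (∀ i, ‖P' i‖ ≤ M) ∧ (∀ i, ‖P'' i‖ ≤ M) ∧ C₀ ≤ M := by
    obtain ⟨M₀, hM₀⟩ := Finite.exists_le fun i ↦ ‖P' i‖ + ‖P'' i‖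
    refine ⟨1 + |C₀| + |M₀|, by positivity, fun i ↦ ?_, fun i ↦ ?_, ?_⟩
    · linarith [hM₀ i, norm_nonneg (P'' i), le_abs_self M₀, abs_nonneg C₀]
    · linarith [hM₀ i, norm_nonneg (P' i), le_abs_self M₀, abs_nonneg C₀]
    · linarith [le_abs_self C₀, abs_nonneg M₀]
  set δ := min ε' (1 / 2)
  obtain ⟨C, hC, hest⟩ := hmicro (δ / (36 * M ^ 2)) (by positivity)
  refine ⟨18 * C, by positivity, fun u huT huS ↦ ?_⟩
  set e := ‖T ⟨u, huT⟩‖ ^ 2 + ‖S ⟨u, huS⟩‖ ^ 2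
  have hloc (i : Fin 3) : ‖T ⟨P i u, hPT i u huT⟩‖ ^ 2 + ‖S ⟨P i u, hPS i u huS⟩‖ ^ 2 ≤
      2 * M ^ 2 * (e + 2 * ‖u‖ ^ 2) := by
    linarith [norm_sq_le_of_norm_sub_apply_le _ (hP'M i) hC₀M (norm_nonneg u) (hcommT i u huT),
      norm_sq_le_of_norm_sub_apply_le _ (hP''M i) hC₀M (norm_nonneg u) (hcommS i u huS)]
  have hpieces : ‖u‖ ^ 2 ≤ δ * ‖u‖ ^ 2 + (δ / 2 * e + 9 * C * ‖ι u‖ ^ 2) := by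
    have := norm_sum_sq_le_card_sq_mul (s := univ) (v := (P · u))
      (c := δ / (36 * M ^ 2) * (2 * M ^ 2 * (e + 2 * ‖u‖ ^ 2)) + C * ‖ι u‖ ^ 2) fun i _ ↦
      (hest i u huT huS).trans (by gcongr; exact hloc i)
    rw [Fin.sum_univ_three, hsum, card_univ, Fintype.card_fin] at this
    exact this.trans_eq (by field_simp; ring)
  calc ‖u‖ ^ 2 ≤ 2 * (δ / 2 * e + 9 * C * ‖ι u‖ ^ 2) :=
        le_two_mul_of_le_mul_add (by positivity) (min_le_right _ _) hpieces
    _ = δ * e + 18 * C * ‖ι u‖ ^ 2 := by ring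
    _ ≤ ε' * e + 18 * C * ‖ι u‖ ^ 2 := by gcongr; exact min_le_left _ _

/-- patching microlocal estimates. If `P₁ + P₂ + P₃ = I` with each `P_i`
bounded, preserving the domains of the closed densely defined operators `T` and `S` and
commuting with them up to a bounded error, and each piece `P_i u` satisfies a compactness
estimate, then a global compactness estimate holds (with constants `ε'` arbitrarily small
as the microlocal `ε` shrinks). -/
theorem patching_microlocal_estimates
    {H H' H'' Hm : Type*}
    [NormedAddCommGroup H] [InnerProductSpace ℂ H] [CompleteSpace H]
    [NormedAddCommGroup H'] [InnerProductSpace ℂ H'] [CompleteSpace H']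
    [NormedAddCommGroup H''] [InnerProductSpace ℂ H''] [CompleteSpace H'']
    [NormedAddCommGroup Hm] [NormedSpace ℂ Hm]
    (ι : H →L[ℂ] Hm)
    (T : H →ₗ.[ℂ] H') (S : H →ₗ.[ℂ] H'')
    (hT_closed : T.IsClosed) (hT_dense : Dense (T.domain : Set H))
    (hS_closed : S.IsClosed) (hS_dense : Dense (S.domain : Set H))
    (P : Fin 3 → H →L[ℂ] H) (P' : Fin 3 → H' →L[ℂ] H') (P'' : Fin 3 → H'' →L[ℂ] H'')
    (hsum : ∀ u : H, P 0 u + P 1 u + P 2 u = u)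
    (hPT : ∀ (i : Fin 3), ∀ u ∈ T.domain, P i u ∈ T.domain)
    (hPS : ∀ (i : Fin 3), ∀ u ∈ S.domain, P i u ∈ S.domain)
    (C₀ : ℝ) (hC₀ : 0 < C₀)
    (hcommT : ∀ (i : Fin 3) (u : H) (hu : u ∈ T.domain),
      ‖T ⟨P i u, hPT i u hu⟩ - P' i (T ⟨u, hu⟩)‖ ≤ C₀ * ‖u‖)
    (hcommS : ∀ (i : Fin 3) (u : H) (hu : u ∈ S.domain),
      ‖S ⟨P i u, hPS i u hu⟩ - P'' i (S ⟨u, hu⟩)‖ ≤ C₀ * ‖u‖)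
    (hmicro : ∀ ε > (0 : ℝ), ∃ C > (0 : ℝ),
      ∀ (i : Fin 3) (u : H) (huT : u ∈ T.domain) (huS : u ∈ S.domain),
        ‖P i u‖ ^ 2 ≤
          ε * (‖T ⟨P i u, hPT i u huT⟩‖ ^ 2 + ‖S ⟨P i u, hPS i u huS⟩‖ ^ 2) +
            C * ‖ι u‖ ^ 2) :
    ∀ ε' > (0 : ℝ), ∃ C' > (0 : ℝ),
      ∀ (u : H) (huT : u ∈ T.domain) (huS : u ∈ S.domain),
        ‖u‖ ^ 2 ≤ ε' * (‖T ⟨u, huT⟩‖ ^ 2 + ‖S ⟨u, huS⟩‖ ^ 2) + C' * ‖ι u‖ ^ 2 :=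
  patching_microlocal_estimates_general ι T S P P' P'' hsum hPT hPS C₀ hcommT hcommS hmicro
end

section
/- Let Q(u) = ‖Tu‖² + ‖Su‖² be a nonnegative quadratic form with 𝓗 = {u : Q(u)=0} closed, and suppose ‖u‖² ≤ C Q(u) for all u ∈ 𝓗^⟂ ∩ dom Q. Then the self-adjoint operator □ associated to Q restricted to 𝓗^⟂ is injective with bounded inverse satisfying ‖□^{-1}f‖ ≤ C‖f‖ for f ∈ 𝓗^⟂ ∩ range □. -/
open scoped InnerProductSpace

theorem norm_le_mul_norm_of_sq_le_mul_re_inner {𝕜 E : Type*} [RCLike 𝕜]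
    [NormedAddCommGroup E] [InnerProductSpace 𝕜 E] {u b : E} {C : ℝ} (hC : 0 ≤ C)
    (h : ‖u‖ ^ 2 ≤ C * RCLike.re ⟪b, u⟫_𝕜) : ‖u‖ ≤ C * ‖b‖ := by
  have hsq : ‖u‖ * ‖u‖ ≤ C * ‖b‖ * ‖u‖ :=
    calc ‖u‖ * ‖u‖ = ‖u‖ ^ 2 := (sq _).symm
      _ ≤ C * RCLike.re ⟪b, u⟫_𝕜 := h
      _ ≤ C * (‖b‖ * ‖u‖) := mul_le_mul_of_nonneg_left (re_inner_le_norm b u) hC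
      _ = C * ‖b‖ * ‖u‖ := (mul_assoc _ _ _).symm
  rcases (norm_nonneg u).eq_or_lt with hu | hu
  · rw [← hu]
    positivity
  · exact le_of_mul_le_mul_right hsq hu

theorem box_invertible_on_harmonic_complement_general
    {H H' H'' : Type*}
    [NormedAddCommGroup H] [InnerProductSpace ℂ H]
    [NormedAddCommGroup H'] [InnerProductSpace ℂ H']
    [NormedAddCommGroup H''] [InnerProductSpace ℂ H'']
    (T : H →ₗ.[ℂ] H') (S : H →ₗ.[ℂ] H'')
    (Box : H →ₗ.[ℂ] H)
    (hdomT : ∀ u ∈ Box.domain, u ∈ T.domain)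
    (hdomS : ∀ u ∈ Box.domain, u ∈ S.domain)
    (hBoxQ : ∀ (u : H) (hu : u ∈ Box.domain),
      (inner (𝕜 := ℂ) (Box ⟨u, hu⟩) u).re =
        ‖T ⟨u, hdomT u hu⟩‖ ^ 2 + ‖S ⟨u, hdomS u hu⟩‖ ^ 2)
    (C : ℝ) (hC : 0 < C)
    (est : ∀ (u : H) (huT : u ∈ T.domain) (huS : u ∈ S.domain),
      (∀ v ∈ {u : H | ∃ (hvT : u ∈ T.domain) (hvS : u ∈ S.domain),
          T ⟨u, hvT⟩ = 0 ∧ S ⟨u, hvS⟩ = 0}, inner (𝕜 := ℂ) u v = 0) →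
      ‖u‖ ^ 2 ≤ C * (‖T ⟨u, huT⟩‖ ^ 2 + ‖S ⟨u, huS⟩‖ ^ 2)) :
    ∀ (u : H) (hu : u ∈ Box.domain),
      (∀ v ∈ {u : H | ∃ (hvT : u ∈ T.domain) (hvS : u ∈ S.domain),
          T ⟨u, hvT⟩ = 0 ∧ S ⟨u, hvS⟩ = 0}, inner (𝕜 := ℂ) u v = 0) →
      (Box ⟨u, hu⟩ = 0 → u = 0) ∧ ‖u‖ ≤ C * ‖Box ⟨u, hu⟩‖ := by
  intro u hu horth
  have hcoercive : ‖u‖ ^ 2 ≤ C * (⟪Box ⟨u, hu⟩, u⟫_ℂ).re :=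
    (hBoxQ u hu).symm ▸ est u (hdomT u hu) (hdomS u hu) horth
  have hbound : ‖u‖ ≤ C * ‖Box ⟨u, hu⟩‖ :=
    norm_le_mul_norm_of_sq_le_mul_re_inner (𝕜 := ℂ) hC.le hcoercive
  refine ⟨fun hBox => norm_le_zero_iff.mp ?_, hbound⟩
  simpa [hBox] using hbound

/-- if `Q(u) = ‖Tu‖² + ‖Su‖²`, the harmonic space `𝓗 = {u : Q u = 0}` is
closed, and `‖u‖² ≤ C Q(u)` on `𝓗ᗮ ∩ dom Q`, then the self-adjoint operator `□`
associated to `Q` is injective on `𝓗ᗮ` with bounded inverse of norm at most `C`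
(cf. Nicoara, Lemma 5.3). -/
theorem box_invertible_on_harmonic_complement
    {H H' H'' : Type*}
    [NormedAddCommGroup H] [InnerProductSpace ℂ H] [CompleteSpace H]
    [NormedAddCommGroup H'] [InnerProductSpace ℂ H'] [CompleteSpace H']
    [NormedAddCommGroup H''] [InnerProductSpace ℂ H''] [CompleteSpace H'']
    (T : H →ₗ.[ℂ] H') (S : H →ₗ.[ℂ] H'')
    (hT_closed : T.IsClosed) (hS_closed : S.IsClosed)
    (h_dense : Dense ((T.domain ⊓ S.domain : Submodule ℂ H) : Set H))
    (h𝓗_closed : IsClosed {u : H | ∃ (huT : u ∈ T.domain) (huS : u ∈ S.domain),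
      T ⟨u, huT⟩ = 0 ∧ S ⟨u, huS⟩ = 0})
    (Box : H →ₗ.[ℂ] H) (hBox_sa : IsSelfAdjoint Box)
    (hdomT : ∀ u ∈ Box.domain, u ∈ T.domain)
    (hdomS : ∀ u ∈ Box.domain, u ∈ S.domain)
    (hBoxQ : ∀ (u : H) (hu : u ∈ Box.domain),
      (inner (𝕜 := ℂ) (Box ⟨u, hu⟩) u).re =
        ‖T ⟨u, hdomT u hu⟩‖ ^ 2 + ‖S ⟨u, hdomS u hu⟩‖ ^ 2)
    (C : ℝ) (hC : 0 < C)
    (est : ∀ (u : H) (huT : u ∈ T.domain) (huS : u ∈ S.domain),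
      (∀ v ∈ {u : H | ∃ (hvT : u ∈ T.domain) (hvS : u ∈ S.domain),
          T ⟨u, hvT⟩ = 0 ∧ S ⟨u, hvS⟩ = 0}, inner (𝕜 := ℂ) u v = 0) →
      ‖u‖ ^ 2 ≤ C * (‖T ⟨u, huT⟩‖ ^ 2 + ‖S ⟨u, huS⟩‖ ^ 2)) :
    ∀ (u : H) (hu : u ∈ Box.domain),
      (∀ v ∈ {u : H | ∃ (hvT : u ∈ T.domain) (hvS : u ∈ S.domain),
          T ⟨u, hvT⟩ = 0 ∧ S ⟨u, hvS⟩ = 0}, inner (𝕜 := ℂ) u v = 0) →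
      (Box ⟨u, hu⟩ = 0 → u = 0) ∧ ‖u‖ ≤ C * ‖Box ⟨u, hu⟩‖ :=
  box_invertible_on_harmonic_complement_general T S Box hdomT hdomS hBoxQ C hC est
end
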